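/- If $\Re\beta \geq -1$, then $|\Gamma(\beta + 1/2)|^{-1} \leq C \exp(\pi |\Im\beta|)$ for some absolute constant $C$ independent of $\beta$. -/

import Mathlib

/-!
On the strip `-1 ≤ Re w ≤ 2` the reflection formula gives
`1 / Γ(w) = Γ(3 - w) sin(π w) / (π (w - 1) (w - 2))`. There `|Γ(3 - w)| ≤ Γ(3 - Re w) ≤ 6` by
convexity of the real Gamma function, and the mean value theorem gives
`|sin(π w)| ≤ π |w - n| e^{π |Im w|}` for every integer `n`, which absorbs the zeros of the
denominator. To the right of the strip, `Γ(w) = (w - 1) Γ(w - 1)` with `|w - 1| ≥ 1`, so `1 / |Γ|`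
does not increase under `w ↦ w + 1`.
-/

open Complex Real

theorem Real.Gamma_le_six_of_mem_Icc {x : ℝ} (hx : x ∈ Set.Icc 1 4) : Real.Gamma x ≤ 6 := by
  have hGamma_four : Real.Gamma 4 = 6 := by
    rw [show (4 : ℝ) = (3 : ℕ) + 1 by norm_num, Real.Gamma_nat_eq_factorial]
    norm_num [Nat.factorial]
  have := Real.convexOn_Gamma.le_on_segment (by norm_num : (1 : ℝ) ∈ Set.Ioi 0)
    (by norm_num : (4 : ℝ) ∈ Set.Ioi 0) (by rwa [segment_eq_Icc (by norm_num)])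
  rw [Real.Gamma_one, hGamma_four] at this
  exact this.trans (max_le (by norm_num) le_rfl)

namespace Complex

theorem norm_cos_le_exp_abs_im (z : ℂ) : ‖cos z‖ ≤ Real.exp |z.im| := by
  have hexp (u : ℂ) (hu : u.re = z.im ∨ u.re = -z.im) : ‖exp u‖ ≤ Real.exp |z.im| := by
    rw [norm_exp]
    rcases hu with hu | hu <;> rw [hu]
    exacts [Real.exp_le_exp.2 (le_abs_self _), Real.exp_le_exp.2 (neg_le_abs _)]
  calc ‖cos z‖ = ‖exp (z * I) + exp (-z * I)‖ / 2 := by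
        rw [cos, norm_div, RCLike.norm_ofNat]
    _ ≤ (Real.exp |z.im| + Real.exp |z.im|) / 2 := by
        gcongr
        refine (norm_add_le _ _).trans (add_le_add (hexp _ ?_) (hexp _ ?_)) <;> simp
    _ = Real.exp |z.im| := by ring

theorem norm_sin_le_norm_mul_exp_abs_im (z : ℂ) : ‖sin z‖ ≤ ‖z‖ * Real.exp |z.im| := by
  set strip := {w : ℂ | |w.im| ≤ |z.im|}
  have hconvex : Convex ℝ strip := by
    have : strip = imLm ⁻¹' Set.Icc (-|z.im|) |z.im| := by ext w; simp [strip, abs_le]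
    exact this ▸ (convex_Icc _ _).linear_preimage imLm
  have hderiv (w : ℂ) (hw : w ∈ strip) : ‖deriv sin w‖ ≤ Real.exp |z.im| := by
    rw [deriv_sin]
    exact (norm_cos_le_exp_abs_im w).trans (Real.exp_le_exp.2 hw)
  simpa [mul_comm] using hconvex.norm_image_sub_le_of_norm_deriv_le
    (fun w _ => differentiableAt_sin) hderiv (x := 0) (y := z) (by simp [strip]) (by simp [strip])

theorem norm_sin_pi_mul_le (w : ℂ) (n : ℤ) :
    ‖sin (π * w)‖ ≤ π * ‖w - n‖ * Real.exp (π * |w.im|) := by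
  have hshift : ‖sin (π * (w - n))‖ = ‖sin (π * w)‖ := by
    rw [mul_sub, mul_comm (π : ℂ) n, sin_antiperiodic.sub_int_mul_eq, norm_mul]
    simp
  calc ‖sin (π * w)‖ = ‖sin (π * (w - n))‖ := hshift.symm
    _ ≤ ‖π * (w - n)‖ * Real.exp |(π * (w - n)).im| := norm_sin_le_norm_mul_exp_abs_im _
    _ = π * ‖w - n‖ * Real.exp (π * |w.im|) := by simp [abs_mul, abs_of_pos Real.pi_pos]

theorem norm_sin_pi_mul_le_two_pi_mul (w : ℂ) (n : ℤ) :
    ‖sin (π * w)‖ ≤ 2 * π * (‖w - n‖ * ‖w - (n + 1)‖) * Real.exp (π * |w.im|) := by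
  set a := ‖w - n‖
  set b := ‖w - (n + 1)‖
  set s := ‖sin (π * w)‖
  set E := Real.exp (π * |w.im|)
  have hab : 1 ≤ a + b := by simpa using norm_sub_le (w - n) (w - (n + 1))
  have ha : s ≤ π * a * E := norm_sin_pi_mul_le w n
  have hb : s ≤ π * b * E := by simpa using norm_sin_pi_mul_le w (n + 1)
  calc s ≤ s * a + s * b := by nlinarith [norm_nonneg (sin (π * w))]
    _ ≤ π * b * E * a + π * a * E * b := by gcongr
    _ = 2 * π * (a * b) * E := by ring

theorem norm_Gamma_le_Gamma_re {s : ℂ} (hs : 0 < s.re) : ‖Gamma s‖ ≤ Real.Gamma s.re := by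
  rw [Gamma_eq_integral hs, Real.Gamma_eq_integral hs, GammaIntegral]
  refine (MeasureTheory.norm_integral_le_integral_norm _).trans_eq ?_
  refine MeasureTheory.setIntegral_congr_fun measurableSet_Ioi fun x (hx : 0 < x) => ?_
  simp [norm_cpow_eq_rpow_re_of_pos hx, norm_exp]

/-- At the poles `-n` this uses Mathlib's junk value `Γ(-n) = 0`. -/
theorem inv_norm_Gamma_intCast_le_one (k : ℤ) : ‖Gamma k‖⁻¹ ≤ 1 := by
  obtain ⟨n, rfl | rfl⟩ := Int.eq_nat_or_neg k
  · cases n with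
    | zero => simp
    | succ m =>
      have : (1 : ℝ) ≤ ‖Gamma ((m + 1 : ℕ) : ℤ)‖ := by
        simpa [Gamma_nat_eq_factorial] using Nat.one_le_iff_ne_zero.2 (Nat.factorial_ne_zero m)
      exact inv_le_one_of_one_le₀ this
  · simp [Gamma_neg_nat_eq_zero]

theorem sub_intCast_ne_zero_of_sin_pi_mul_ne_zero {z : ℂ} (h : sin (π * z) ≠ 0) (n : ℤ) :
    z - n ≠ 0 := by
  rintro hz
  rw [sub_eq_zero.1 hz, mul_comm] at h
  exact h (sin_int_mul_pi n)

theorem Gamma_three_sub_mul_sin {z : ℂ} (h : sin (π * z) ≠ 0) :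
    Gamma (3 - z) * sin (π * z) = (Gamma z)⁻¹ * (π * ((z - 1) * (z - 2))) := by
  have hz1 : 1 - z ≠ 0 := by
    simpa [neg_sub] using neg_ne_zero.2 (sub_intCast_ne_zero_of_sin_pi_mul_ne_zero h 1)
  have hz2 : 2 - z ≠ 0 := by
    simpa [neg_sub] using neg_ne_zero.2 (sub_intCast_ne_zero_of_sin_pi_mul_ne_zero h 2)
  have hshift : Gamma (3 - z) = (2 - z) * ((1 - z) * Gamma (1 - z)) := by
    rw [show 3 - z = 2 - z + 1 by ring, Gamma_add_one _ hz2, show 2 - z = 1 - z + 1 by ring,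
      Gamma_add_one _ hz1]
  have hreflection := Gamma_mul_Gamma_one_sub z
  have hGamma : Gamma z ≠ 0 := by
    intro h0
    rw [h0, zero_mul] at hreflection
    exact div_ne_zero (ofReal_ne_zero.2 Real.pi_ne_zero) h hreflection.symm
  rw [hshift, eq_inv_mul_iff_mul_eq₀ hGamma]
  rw [eq_div_iff h] at hreflection
  linear_combination (z - 1) * (z - 2) * hreflection

theorem inv_norm_Gamma_le_of_re_mem_Icc {w : ℂ} (hw : w.re ∈ Set.Icc (-1) 2) :
    ‖Gamma w‖⁻¹ ≤ 12 * Real.exp (π * |w.im|) := by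
  obtain ⟨hlo, hhi⟩ := hw
  set E := Real.exp (π * |w.im|)
  have hE : 1 ≤ E := Real.one_le_exp (by positivity)
  by_cases hsin : sin (π * w) = 0
  · obtain ⟨k, hk⟩ := sin_eq_zero_iff.1 hsin
    have hwk : w = k := mul_left_cancel₀ (ofReal_ne_zero.2 Real.pi_ne_zero) (by rw [hk]; ring)
    rw [hwk]
    linarith [inv_norm_Gamma_intCast_le_one k]
  have ha := norm_pos_iff.2 (sub_intCast_ne_zero_of_sin_pi_mul_ne_zero hsin 1)
  have hb := norm_pos_iff.2 (sub_intCast_ne_zero_of_sin_pi_mul_ne_zero hsin 2)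
  push_cast at ha hb
  have hre : (3 - w).re = 3 - w.re := by simp
  have hGamma : ‖Gamma (3 - w)‖ ≤ 6 :=
    (norm_Gamma_le_Gamma_re (by rw [hre]; linarith)).trans
      (Real.Gamma_le_six_of_mem_Icc (by rw [hre]; constructor <;> linarith))
  have hsin_le : ‖sin (π * w)‖ ≤ 2 * π * (‖w - 1‖ * ‖w - 2‖) * E := by
    simpa [one_add_one_eq_two] using norm_sin_pi_mul_le_two_pi_mul w 1
  have hmul : ‖Gamma w‖⁻¹ * (π * (‖w - 1‖ * ‖w - 2‖)) ≤ 12 * E * (π * (‖w - 1‖ * ‖w - 2‖)) := by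
    calc ‖Gamma w‖⁻¹ * (π * (‖w - 1‖ * ‖w - 2‖))
        = ‖Gamma (3 - w)‖ * ‖sin (π * w)‖ := by
          simpa [abs_of_pos Real.pi_pos] using (congrArg norm (Gamma_three_sub_mul_sin hsin)).symm
      _ ≤ 6 * (2 * π * (‖w - 1‖ * ‖w - 2‖) * E) := by gcongr
      _ = 12 * E * (π * (‖w - 1‖ * ‖w - 2‖)) := by ring
  exact le_of_mul_le_mul_right hmul (by positivity)

theorem inv_norm_Gamma_le_inv_norm_Gamma_sub_one {w : ℂ} (hw : 2 ≤ w.re) :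
    ‖Gamma w‖⁻¹ ≤ ‖Gamma (w - 1)‖⁻¹ := by
  have hnorm : 1 ≤ ‖w - 1‖ := by
    calc (1 : ℝ) ≤ (w - 1).re := by rw [sub_re, one_re]; linarith
      _ ≤ ‖w - 1‖ := re_le_norm _
  have hrec : Gamma w = (w - 1) * Gamma (w - 1) := by
    rw [← Gamma_add_one _ (norm_pos_iff.1 (by linarith)), sub_add_cancel]
  rw [hrec, norm_mul, mul_inv]
  exact mul_le_of_le_one_left (inv_nonneg.2 (norm_nonneg _)) (inv_le_one_of_one_le₀ hnorm)

theorem inv_norm_Gamma_le_of_le_on_strip {a b : ℝ} {B : ℝ → ℝ} (hab : a + 1 ≤ b) (hb : 2 ≤ b)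
    (hstrip : ∀ w : ℂ, w.re ∈ Set.Icc a b → ‖Gamma w‖⁻¹ ≤ B w.im) {w : ℂ} (hw : a ≤ w.re) :
    ‖Gamma w‖⁻¹ ≤ B w.im := by
  suffices h : ∀ n : ℕ, ∀ w : ℂ, a ≤ w.re → w.re ≤ b + n → ‖Gamma w‖⁻¹ ≤ B w.im by
    obtain ⟨n, hn⟩ := exists_nat_ge (w.re - b)
    exact h n w hw (by linarith)
  intro n
  induction n with
  | zero => exact fun w hlo hhi => hstrip w ⟨hlo, by simpa using hhi⟩
  | succ n ih =>
    intro w hlo hhi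
    by_cases hwn : w.re ≤ b + n
    · exact ih w hlo hwn
    have hn : (0 : ℝ) ≤ n := n.cast_nonneg
    have hre : (w - 1).re = w.re - 1 := by rw [sub_re, one_re]
    calc ‖Gamma w‖⁻¹ ≤ ‖Gamma (w - 1)‖⁻¹ := inv_norm_Gamma_le_inv_norm_Gamma_sub_one (by linarith)
      _ ≤ B (w - 1).im :=
        ih (w - 1) (by rw [hre]; linarith) (by push_cast at hhi; rw [hre]; linarith)
      _ = B w.im := by simp

end Complex

theorem gamma_reciprocal_bound :
    ∃ C > 0, ∀ β : ℂ, -1 ≤ β.re →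
      ‖Complex.Gamma (β + 1/2)‖⁻¹ ≤ C * Real.exp (Real.pi * |β.im|) := by
  refine ⟨12, by norm_num, fun β hβ => ?_⟩
  have hre : (β + 1 / 2).re = β.re + 1 / 2 := by simp
  simpa using inv_norm_Gamma_le_of_le_on_strip (B := fun y => 12 * Real.exp (π * |y|))
    (by norm_num) le_rfl (fun w hw => inv_norm_Gamma_le_of_re_mem_Icc hw)
    (w := β + 1 / 2) (by rw [hre]; linarith)
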